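/- For every 1-form β on ℝ⁸, the 3-form ∗(β ∧ Φ₀) satisfies ∗(β∧Φ₀) ∧ Φ₀ = 7·∗β. Consequently, if a 3-form γ lies in both Λ³₈ = {∗(β∧Φ₀) : β ∈ Λ¹} and Λ³₄₈ = {γ ∈ Λ³ : γ∧Φ₀ = 0}, then γ = 0. -/

import Mathlib

open Finset

namespace Spin7

/-- The exterior algebra of `ℝⁿ` modeled as coefficient functions on subsets of `Fin n`:
`a S` is the coefficient of `dx^S` (indices in increasing order). -/
abbrev Ext (n : ℕ) := Finset (Fin n) → ℝ

variable {n : ℕ}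

/-- The sign `(-1)^{#{(s,t) ∈ S×T : t < s}}` arising when concatenating the increasing
enumerations of `S` and `T` and reordering. -/
noncomputable def msign (S T : Finset (Fin n)) : ℝ :=
  (-1 : ℝ) ^ (((S ×ˢ T).filter (fun p => p.2 < p.1)).card)

/-- The wedge product. -/
noncomputable def wedge (a b : Ext n) : Ext n :=
  fun U => ∑ S ∈ U.powerset, msign S (U \ S) * a S * b (U \ S)

/-- The Hodge star operator for the standard Euclidean metric and orientation. -/
noncomputable def hstar (a : Ext n) : Ext n :=
  fun U => msign Uᶜ U * a Uᶜ

/-- The basic 1-form `dxⁱ`. -/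
def dx (i : Fin n) : Ext n := fun U => if U = {i} then 1 else 0

/-- The standard volume form `dx¹ ∧ ⋯ ∧ dxⁿ`. -/
def vol : Ext n := fun U => if U = univ then 1 else 0

/-- Interior product with the vector `v`. -/
noncomputable def iprod (v : Fin n → ℝ) (a : Ext n) : Ext n :=
  fun U => ∑ i ∈ Uᶜ, v i * msign {i} U * a (insert i U)

/-- The standard inner product on forms (the `dx^S` are orthonormal). -/
noncomputable def formInner (a b : Ext n) : ℝ := ∑ U, a U * b U

/-- `a` is a homogeneous form of degree `k`. -/
def isForm (k : ℕ) (a : Ext n) : Prop := ∀ U, U.card ≠ k → a U = 0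

/-- `dxⁱ ∧ dxʲ ∧ dxᵏ ∧ dxˡ`. -/
noncomputable def dx4 (i j k l : Fin 8) : Ext 8 :=
  wedge (dx i) (wedge (dx j) (wedge (dx k) (dx l)))

/-- The standard Cayley 4-form `Φ₀` on `ℝ⁸` (coordinates indexed `0,…,7` instead of `1,…,8`). -/
noncomputable def Φ₀ : Ext 8 :=
  dx4 0 1 2 3 + dx4 0 1 4 5 + dx4 0 1 6 7 + dx4 0 2 4 6 - dx4 0 2 5 7 - dx4 0 3 4 7
    - dx4 0 3 5 6 - dx4 1 2 4 7 - dx4 1 2 5 6 - dx4 1 3 4 6 + dx4 1 3 5 7 + dx4 2 3 4 5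
    + dx4 2 3 6 7 + dx4 4 5 6 7

namespace Spin7Z

abbrev ExtZ (n : ℕ) := Finset (Fin n) → ℤ
def msignZ {n} (S T : Finset (Fin n)) : ℤ :=
  (-1 : ℤ) ^ (((S ×ˢ T).filter (fun p => p.2 < p.1)).card)
def wedgeZ {n} (a b : ExtZ n) : ExtZ n :=
  fun U => ∑ S ∈ U.powerset, msignZ S (U \ S) * a S * b (U \ S)
def hstarZ {n} (a : ExtZ n) : ExtZ n := fun U => msignZ Uᶜ U * a Uᶜ
def dxZ {n} (i : Fin n) : ExtZ n := fun U => if U = {i} then 1 else 0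
def deltaZ {n} (S : Finset (Fin n)) (c : ℤ) : ExtZ n := fun U => if U = S then c else 0
def dx4Z (i j k l : Fin 8) : ExtZ 8 := wedgeZ (dxZ i) (wedgeZ (dxZ j) (wedgeZ (dxZ k) (dxZ l)))
def PhiZ : ExtZ 8 :=
  dx4Z 0 1 2 3 + dx4Z 0 1 4 5 + dx4Z 0 1 6 7 + dx4Z 0 2 4 6 - dx4Z 0 2 5 7 - dx4Z 0 3 4 7
    - dx4Z 0 3 5 6 - dx4Z 1 2 4 7 - dx4Z 1 2 5 6 - dx4Z 1 3 4 6 + dx4Z 1 3 5 7 + dx4Z 2 3 4 5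
    + dx4Z 2 3 6 7 + dx4Z 4 5 6 7

lemma wedgeZ_delta {n} (S : Finset (Fin n)) (c : ℤ) (b : ExtZ n) (U : Finset (Fin n)) :
    wedgeZ (deltaZ S c) b U = if S ⊆ U then msignZ S (U \ S) * c * b (U \ S) else 0 := by
  unfold wedgeZ
  by_cases h : S ⊆ U
  · rw [if_pos h, Finset.sum_eq_single S]
    · simp [deltaZ]
    · intro T _ hne; simp [deltaZ, hne]
    · intro h'; exact absurd (Finset.mem_powerset.mpr h) h'
  · rw [if_neg h]
    refine Finset.sum_eq_zero fun T hT => ?_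
    have : T ≠ S := fun e => h (e ▸ Finset.mem_powerset.mp hT)
    simp [deltaZ, this]

lemma dxZ_eq_delta {n} (i : Fin n) : dxZ i = deltaZ {i} 1 := rfl

lemma wedgeZ_dx {n} (i : Fin n) (b : ExtZ n) (U : Finset (Fin n)) :
    wedgeZ (dxZ i) b U = if i ∈ U then msignZ {i} (U \ {i}) * b (U \ {i}) else 0 := by
  rw [dxZ_eq_delta, wedgeZ_delta]
  simp [Finset.singleton_subset_iff]

def dx4F (i j k l : Fin 8) : ExtZ 8 := fun U =>
  if i ∈ U then msignZ {i} (U \ {i}) *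
    (if j ∈ U \ {i} then msignZ {j} ((U \ {i}) \ {j}) *
      (if k ∈ (U \ {i}) \ {j} then msignZ {k} (((U \ {i}) \ {j}) \ {k}) *
        (if ((U \ {i}) \ {j}) \ {k} = {l} then 1 else 0) else 0) else 0) else 0

lemma dx4Z_eq (i j k l : Fin 8) : dx4Z i j k l = dx4F i j k l := by
  funext U
  simp only [dx4Z, dx4F, wedgeZ_dx, dxZ]

def PhiF : ExtZ 8 :=
  dx4F 0 1 2 3 + dx4F 0 1 4 5 + dx4F 0 1 6 7 + dx4F 0 2 4 6 - dx4F 0 2 5 7 - dx4F 0 3 4 7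
    - dx4F 0 3 5 6 - dx4F 1 2 4 7 - dx4F 1 2 5 6 - dx4F 1 3 4 6 + dx4F 1 3 5 7 + dx4F 2 3 4 5
    + dx4F 2 3 6 7 + dx4F 4 5 6 7

lemma PhiZ_eq_PhiF : PhiZ = PhiF := by
  simp only [PhiZ, PhiF, dx4Z_eq]

def sumDelta {n} (l : List (Finset (Fin n) × ℤ)) : ExtZ n :=
  fun U => (l.map (fun p => deltaZ p.1 p.2 U)).sum

lemma sumDelta_cons {n} (p : Finset (Fin n) × ℤ) (l : List (Finset (Fin n) × ℤ)) :
    sumDelta (p :: l) = deltaZ p.1 p.2 + sumDelta l := by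
  funext U; simp [sumDelta]

lemma wedgeZ_add_left {n} (a b c : ExtZ n) : wedgeZ (a + b) c = wedgeZ a c + wedgeZ b c := by
  funext U
  simp only [wedgeZ, Pi.add_apply, ← Finset.sum_add_distrib]
  exact Finset.sum_congr rfl fun S _ => by ring

lemma wedgeZ_zero_left {n} (c : ExtZ n) : wedgeZ 0 c = 0 := by
  funext U
  simp [wedgeZ]

lemma wedgeZ_sumDelta {n} (l : List (Finset (Fin n) × ℤ)) (b : ExtZ n) (U : Finset (Fin n)) :
    wedgeZ (sumDelta l) b U =
      (l.map (fun p => if p.1 ⊆ U then msignZ p.1 (U \ p.1) * p.2 * b (U \ p.1) else 0)).sum := by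
  induction l with
  | nil =>
      have h0 : sumDelta ([] : List (Finset (Fin n) × ℤ)) = 0 := by funext U; simp [sumDelta]
      simp [h0, wedgeZ_zero_left]
  | cons p l ih =>
      rw [sumDelta_cons, wedgeZ_add_left]
      simp only [Pi.add_apply, List.map_cons, List.sum_cons, wedgeZ_delta, ih]
def PhiL : List (Finset (Fin 8) × ℤ) :=
  [(({0,1,2,3} : Finset (Fin 8)), (1 : ℤ)), (({0,1,4,5} : Finset (Fin 8)), (1 : ℤ)), (({0,1,6,7} : Finset (Fin 8)), (1 : ℤ)), (({0,2,4,6} : Finset (Fin 8)), (1 : ℤ)), (({0,2,5,7} : Finset (Fin 8)), (-1 : ℤ)), (({0,3,4,7} : Finset (Fin 8)), (-1 : ℤ)), (({0,3,5,6} : Finset (Fin 8)), (-1 : ℤ)), (({1,2,4,7} : Finset (Fin 8)), (-1 : ℤ)), (({1,2,5,6} : Finset (Fin 8)), (-1 : ℤ)), (({1,3,4,6} : Finset (Fin 8)), (-1 : ℤ)), (({1,3,5,7} : Finset (Fin 8)), (1 : ℤ)), (({2,3,4,5} : Finset (Fin 8)), (1 : ℤ)), (({2,3,6,7} : Finset (Fin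 8)), (1 : ℤ)), (({4,5,6,7} : Finset (Fin 8)), (1 : ℤ))]
def psiL : Fin 8 → List (Finset (Fin 8) × ℤ)
  | 0 => [(({1,2,3} : Finset (Fin 8)), (1 : ℤ)), (({1,4,5} : Finset (Fin 8)), (1 : ℤ)), (({1,6,7} : Finset (Fin 8)), (1 : ℤ)), (({2,4,6} : Finset (Fin 8)), (1 : ℤ)), (({2,5,7} : Finset (Fin 8)), (-1 : ℤ)), (({3,4,7} : Finset (Fin 8)), (-1 : ℤ)), (({3,5,6} : Finset (Fin 8)), (-1 : ℤ))]
  | 1 => [(({0,2,3} : Finset (Fin 8)), (-1 : ℤ)), (({0,4,5} : Finset (Fin 8)), (-1 : ℤ)), (({0,6,7} : Finset (Fin 8)), (-1 : ℤ)), (({2,4,7} : Finset (Fin 8)), (-1 : ℤ)), (({2,5,6} : Finset (Fin 8)), (-1 : ℤ)), (({3,4,6} : Finset (Fin 8)), (-1 : ℤ)), (({3,5,7} : Finset (Fin 8)), (1 : ℤ))]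
  | 2 => [(({0,1,3} : Finset (Fin 8)), (1 : ℤ)), (({0,4,6} : Finset (Fin 8)), (-1 : ℤ)), (({0,5,7} : Finset (Fin 8)), (1 : ℤ)), (({1,4,7} : Finset (Fin 8)), (1 : ℤ)), (({1,5,6} : Finset (Fin 8)), (1 : ℤ)), (({3,4,5} : Finset (Fin 8)), (1 : ℤ)), (({3,6,7} : Finset (Fin 8)), (1 : ℤ))]
  | 3 => [(({0,1,2} : Finset (Fin 8)), (-1 : ℤ)), (({0,4,7} : Finset (Fin 8)), (1 : ℤ)), (({0,5,6} : Finset (Fin 8)), (1 : ℤ)), (({1,4,6} : Finset (Fin 8)), (1 : ℤ)), (({1,5,7} : Finset (Fin 8)), (-1 : ℤ)), (({2,4,5} : Finset (Fin 8)), (-1 : ℤ)), (({2,6,7} : Finset (Fin 8)), (-1 : ℤ))]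
  | 4 => [(({0,1,5} : Finset (Fin 8)), (1 : ℤ)), (({0,2,6} : Finset (Fin 8)), (1 : ℤ)), (({0,3,7} : Finset (Fin 8)), (-1 : ℤ)), (({1,2,7} : Finset (Fin 8)), (-1 : ℤ)), (({1,3,6} : Finset (Fin 8)), (-1 : ℤ)), (({2,3,5} : Finset (Fin 8)), (1 : ℤ)), (({5,6,7} : Finset (Fin 8)), (1 : ℤ))]
  | 5 => [(({0,1,4} : Finset (Fin 8)), (-1 : ℤ)), (({0,2,7} : Finset (Fin 8)), (-1 : ℤ)), (({0,3,6} : Finset (Fin 8)), (-1 : ℤ)), (({1,2,6} : Finset (Fin 8)), (-1 : ℤ)), (({1,3,7} : Finset (Fin 8)), (1 : ℤ)), (({2,3,4} : Finset (Fin 8)), (-1 : ℤ)), (({4,6,7} : Finset (Fin 8)), (-1 : ℤ))]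
  | 6 => [(({0,1,7} : Finset (Fin 8)), (1 : ℤ)), (({0,2,4} : Finset (Fin 8)), (-1 : ℤ)), (({0,3,5} : Finset (Fin 8)), (1 : ℤ)), (({1,2,5} : Finset (Fin 8)), (1 : ℤ)), (({1,3,4} : Finset (Fin 8)), (1 : ℤ)), (({2,3,7} : Finset (Fin 8)), (1 : ℤ)), (({4,5,7} : Finset (Fin 8)), (1 : ℤ))]
  | 7 => [(({0,1,6} : Finset (Fin 8)), (-1 : ℤ)), (({0,2,5} : Finset (Fin 8)), (1 : ℤ)), (({0,3,4} : Finset (Fin 8)), (1 : ℤ)), (({1,2,4} : Finset (Fin 8)), (1 : ℤ)), (({1,3,5} : Finset (Fin 8)), (-1 : ℤ)), (({2,3,6} : Finset (Fin 8)), (-1 : ℤ)), (({4,5,6} : Finset (Fin 8)), (-1 : ℤ))]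


def maskF (U : Finset (Fin 8)) : ℕ := ∑ i ∈ U, 2 ^ (i : ℕ)
def PhiT : ExtZ 8 := fun U => match maskF U with
  | 15 => 1
  | 51 => 1
  | 60 => 1
  | 85 => 1
  | 90 => (-1)
  | 102 => (-1)
  | 105 => (-1)
  | 150 => (-1)
  | 153 => (-1)
  | 165 => (-1)
  | 170 => 1
  | 195 => 1
  | 204 => 1
  | 240 => 1
  | _ => 0
def psiT0 : ExtZ 8 := fun U => match maskF U with
  | 14 => 1
  | 50 => 1
  | 84 => 1
  | 104 => (-1)
  | 152 => (-1)
  | 164 => (-1)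
  | 194 => 1
  | _ => 0
def psiT1 : ExtZ 8 := fun U => match maskF U with
  | 13 => (-1)
  | 49 => (-1)
  | 88 => (-1)
  | 100 => (-1)
  | 148 => (-1)
  | 168 => 1
  | 193 => (-1)
  | _ => 0
def psiT2 : ExtZ 8 := fun U => match maskF U with
  | 11 => 1
  | 56 => 1
  | 81 => (-1)
  | 98 => 1
  | 146 => 1
  | 161 => 1
  | 200 => 1
  | _ => 0
def psiT3 : ExtZ 8 := fun U => match maskF U with
  | 7 => (-1)
  | 52 => (-1)
  | 82 => 1
  | 97 => 1
  | 145 => 1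
  | 162 => (-1)
  | 196 => (-1)
  | _ => 0
def psiT4 : ExtZ 8 := fun U => match maskF U with
  | 35 => 1
  | 44 => 1
  | 69 => 1
  | 74 => (-1)
  | 134 => (-1)
  | 137 => (-1)
  | 224 => 1
  | _ => 0
def psiT5 : ExtZ 8 := fun U => match maskF U with
  | 19 => (-1)
  | 28 => (-1)
  | 70 => (-1)
  | 73 => (-1)
  | 133 => (-1)
  | 138 => 1
  | 208 => (-1)
  | _ => 0
def psiT6 : ExtZ 8 := fun U => match maskF U with
  | 21 => (-1)
  | 26 => 1
  | 38 => 1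
  | 41 => 1
  | 131 => 1
  | 140 => 1
  | 176 => 1
  | _ => 0
def psiT7 : ExtZ 8 := fun U => match maskF U with
  | 22 => 1
  | 25 => 1
  | 37 => 1
  | 42 => (-1)
  | 67 => (-1)
  | 76 => (-1)
  | 112 => (-1)
  | _ => 0


def psiT : Fin 8 → ExtZ 8
  | 0 => psiT0 | 1 => psiT1 | 2 => psiT2 | 3 => psiT3
  | 4 => psiT4 | 5 => psiT5 | 6 => psiT6 | 7 => psiT7

def psiE (i : Fin 8) : ExtZ 8 := sumDelta (psiL i)

set_option maxHeartbeats 40000000 in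
set_option maxRecDepth 20000 in
lemma decideA : ∀ U : Finset (Fin 8), PhiF U = PhiT U := by decide +kernel

lemma PhiZ_eq_PhiT : PhiZ = PhiT := by
  rw [PhiZ_eq_PhiF]; funext U; exact decideA U

set_option maxHeartbeats 40000000 in
set_option maxRecDepth 20000 in
lemma decideP : ∀ (i : Fin 8) (U : Finset (Fin 8)), psiE i U = psiT i U := by decide +kernel

def fastB (i : Fin 8) : ExtZ 8 := fun U =>
  msignZ Uᶜ U * (if i ∈ Uᶜ then msignZ {i} (Uᶜ \ {i}) * PhiT (Uᶜ \ {i}) else 0)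

lemma hB (i : Fin 8) : hstarZ (wedgeZ (dxZ i) PhiT) = fastB i := by
  funext U
  simp only [hstarZ, fastB, wedgeZ_dx]

set_option maxHeartbeats 40000000 in
set_option maxRecDepth 20000 in
lemma decideB : ∀ (i : Fin 8) (U : Finset (Fin 8)), fastB i U = psiT i U := by decide +kernel

def fastC (i : Fin 8) : ExtZ 8 := fun U =>
  ((psiL i).map (fun p => if p.1 ⊆ U then msignZ p.1 (U \ p.1) * p.2 * PhiT (U \ p.1) else 0)).sum

lemma hC (i : Fin 8) : wedgeZ (psiE i) PhiT = fastC i := by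
  funext U
  exact wedgeZ_sumDelta (psiL i) PhiT U

set_option maxHeartbeats 40000000 in
set_option maxRecDepth 20000 in
lemma decideC : ∀ (i : Fin 8) (U : Finset (Fin 8)), fastC i U = 7 * hstarZ (dxZ i) U := by decide +kernel

lemma keyZ (i : Fin 8) :
    wedgeZ (hstarZ (wedgeZ (dxZ i) PhiZ)) PhiZ = fun U => 7 * hstarZ (dxZ i) U := by
  rw [PhiZ_eq_PhiT, hB i, show fastB i = psiT i from funext (decideB i),
      show psiT i = psiE i from funext fun U => (decideP i U).symm, hC i]
  funext U
  exact decideC i U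


end Spin7Z

open Spin7Z

/-! ### Transfer from `ℤ` to `ℝ` -/

noncomputable def castE {n : ℕ} (a : ExtZ n) : Ext n := fun U => (a U : ℝ)

lemma castE_msign {n : ℕ} (S T : Finset (Fin n)) : ((msignZ S T : ℤ) : ℝ) = msign S T := by
  simp [msignZ, msign]

lemma castE_wedge {n : ℕ} (a b : ExtZ n) : castE (wedgeZ a b) = wedge (castE a) (castE b) := by
  funext U
  simp only [castE, wedgeZ, wedge]
  push_cast
  exact Finset.sum_congr rfl fun S _ => by rw [castE_msign]

lemma castE_hstar {n : ℕ} (a : ExtZ n) : castE (hstarZ a) = hstar (castE a) := by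
  funext U
  simp only [castE, hstarZ, hstar]
  push_cast
  rw [castE_msign]

lemma castE_dx {n : ℕ} (i : Fin n) : castE (dxZ i) = dx i := by
  funext U
  simp [castE, dxZ, dx, apply_ite]

lemma castE_add {n : ℕ} (a b : ExtZ n) : castE (a + b) = castE a + castE b := by
  funext U; simp [castE]

lemma castE_sub {n : ℕ} (a b : ExtZ n) : castE (a - b) = castE a - castE b := by
  funext U; simp [castE]

lemma castE_dx4 (i j k l : Fin 8) : castE (dx4Z i j k l) = dx4 i j k l := by
  simp only [dx4Z, dx4, castE_wedge, castE_dx]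

lemma castE_Phi : castE PhiZ = Φ₀ := by
  simp only [PhiZ, Φ₀, castE_add, castE_sub, castE_dx4]

lemma key (i : Fin 8) :
    wedge (hstar (wedge (dx i) Φ₀)) Φ₀ = (7 : ℝ) • hstar (dx i) := by
  have h := congrArg castE (keyZ i)
  rw [castE_wedge, castE_hstar, castE_wedge, castE_dx, castE_Phi] at h
  rw [h]
  funext U
  show ((7 * hstarZ (dxZ i) U : ℤ) : ℝ) = _
  have h2 := congrFun (castE_hstar (dxZ i)) U
  rw [castE_dx] at h2
  push_cast
  rw [show ((hstarZ (dxZ i) U : ℤ) : ℝ) = castE (hstarZ (dxZ i)) U from rfl, h2]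
  simp

/-! ### Linearity -/

lemma wedge_add_left {n : ℕ} (a b c : Ext n) : wedge (a + b) c = wedge a c + wedge b c := by
  funext U
  simp only [wedge, Pi.add_apply, ← Finset.sum_add_distrib]
  exact Finset.sum_congr rfl fun S _ => by ring

lemma wedge_smul_left {n : ℕ} (r : ℝ) (a b : Ext n) : wedge (r • a) b = r • wedge a b := by
  funext U
  simp only [wedge, Pi.smul_apply, smul_eq_mul, Finset.mul_sum]
  exact Finset.sum_congr rfl fun S _ => by ring

lemma hstar_add {n : ℕ} (a b : Ext n) : hstar (a + b) = hstar a + hstar b := by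
  funext U; simp only [hstar, Pi.add_apply]; ring

lemma hstar_smul {n : ℕ} (r : ℝ) (a : Ext n) : hstar (r • a) = r • hstar a := by
  funext U; simp only [hstar, Pi.smul_apply, smul_eq_mul]; ring

noncomputable def Hl : Ext 8 →ₗ[ℝ] Ext 8 where
  toFun := hstar
  map_add' := hstar_add
  map_smul' := hstar_smul

noncomputable def Lmap : Ext 8 →ₗ[ℝ] Ext 8 where
  toFun := fun a => wedge (hstar (wedge a Φ₀)) Φ₀
  map_add' := fun a b => by
    show wedge (hstar (wedge (a + b) Φ₀)) Φ₀ = _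
    rw [wedge_add_left, hstar_add, wedge_add_left]
  map_smul' := fun r a => by
    show wedge (hstar (wedge (r • a) Φ₀)) Φ₀ = _
    simp only [RingHom.id_apply]
    rw [wedge_smul_left, hstar_smul, wedge_smul_left]

lemma basis_decomp (β : Ext 8) (hβ : isForm 1 β) : β = ∑ i : Fin 8, β {i} • dx i := by
  funext U
  have : (∑ i : Fin 8, β {i} • dx i) U = ∑ i : Fin 8, if U = {i} then β {i} else 0 := by
    rw [Finset.sum_apply]
    exact Finset.sum_congr rfl fun i _ => by
      simp only [Pi.smul_apply, dx, smul_eq_mul, mul_ite, mul_one, mul_zero]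
  rw [this]
  by_cases h1 : U.card = 1
  · obtain ⟨j, rfl⟩ := Finset.card_eq_one.mp h1
    rw [Finset.sum_eq_single j]
    · simp
    · intro i _ hne
      rw [if_neg]
      simpa [Finset.singleton_inj] using (Ne.symm hne)
    · simp
  · rw [hβ U h1, Finset.sum_eq_zero]
    intro i _
    rw [if_neg]
    rintro rfl
    simp at h1

lemma part1 (β : Ext 8) (hβ : isForm 1 β) :
    wedge (hstar (wedge β Φ₀)) Φ₀ = (7 : ℝ) • hstar β := by
  have hdec := basis_decomp β hβ
  calc wedge (hstar (wedge β Φ₀)) Φ₀ = Lmap β := rfl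
    _ = Lmap (∑ i : Fin 8, β {i} • dx i) := by rw [← hdec]
    _ = ∑ i : Fin 8, β {i} • Lmap (dx i) := by rw [map_sum]; simp only [map_smul]
    _ = ∑ i : Fin 8, β {i} • ((7 : ℝ) • Hl (dx i)) := by
        refine Finset.sum_congr rfl fun i _ => ?_
        rw [show Lmap (dx i) = wedge (hstar (wedge (dx i) Φ₀)) Φ₀ from rfl, key i]
        rfl
    _ = (7 : ℝ) • ∑ i : Fin 8, β {i} • Hl (dx i) := by
        rw [Finset.smul_sum]
        exact Finset.sum_congr rfl fun i _ => smul_comm _ _ _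
    _ = (7 : ℝ) • Hl (∑ i : Fin 8, β {i} • dx i) := by rw [map_sum]; simp only [map_smul]
    _ = (7 : ℝ) • hstar β := by rw [← hdec]; rfl

/-- For every 1-form `β`, `∗(β∧Φ₀) ∧ Φ₀ = 7·∗β`; consequently a 3-form lying in both
`Λ³₈ = {∗(β∧Φ₀) : β ∈ Λ¹}` and `Λ³₄₈ = {γ : γ∧Φ₀ = 0}` vanishes. -/
theorem Lambda38_Lambda348_trivial_intersection :
    (∀ β : Ext 8, isForm 1 β → wedge (hstar (wedge β Φ₀)) Φ₀ = (7 : ℝ) • hstar β) ∧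
      (∀ γ : Ext 8, (∃ β, isForm 1 β ∧ γ = hstar (wedge β Φ₀)) → wedge γ Φ₀ = 0 → γ = 0) := by
  refine ⟨part1, ?_⟩
  rintro γ ⟨β, hβ, rfl⟩ hw
  have h7 : (7 : ℝ) • hstar β = 0 := by rw [← part1 β hβ]; exact hw
  have hstar0 : hstar β = 0 := by
    have := smul_eq_zero.mp h7
    rcases this with h | h
    · norm_num at h
    · exact h
  have hβ0 : β = 0 := by
    funext V
    have h := congrFun hstar0 Vᶜ
    simp only [hstar, Pi.zero_apply, compl_compl] at h
    have hm : msign V Vᶜ ≠ 0 := by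
      simp [msign]
    exact (mul_eq_zero.mp h).resolve_left hm
  rw [hβ0]
  have hw0 : wedge (0 : Ext 8) Φ₀ = 0 := by
    funext U; simp [wedge]
  rw [hw0]
  funext U
  simp [hstar]

end Spin7
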